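/- For m, m' ≥ 2 and base code RM(1,m') (i.e., r' = 1), the recursively defined code D(2,m) equals the span of { mon_S : S ⊆ Fin (m·m'), |S| ≤ 2, and |S ∩ B_i| ≤ 1 for every i ∈ {1,…,m} }. -/

import Mathlib

/-- Length-`(2^m')^μ` vectors, viewed as functions on `μ` blocks of `m'` binary variables. -/
abbrev Vsp (m' μ : ℕ) := (Fin μ → (Fin m' → ZMod 2)) → ZMod 2

/-- The Reed–Muller code `RM(r', m')` : span of monomials of degree at most `r'`. -/
def RMbase (r' m' : ℕ) : Submodule (ZMod 2) ((Fin m' → ZMod 2) → ZMod 2) :=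
  Submodule.span (ZMod 2)
    {c | ∃ S : Finset (Fin m'), S.card ≤ r' ∧ c = fun x => ∏ i ∈ S, x i}

/-- `(c ⊙ v)(x₁,…,x_μ,x_{μ+1}) = c(x₁,…,x_μ) · v(x_{μ+1})`. -/
def odot {m' μ : ℕ} (c : Vsp m' μ) (v : (Fin m' → ZMod 2) → ZMod 2) : Vsp m' (μ + 1) :=
  fun x => c (fun i => x i.castSucc) * v (x (Fin.last μ))

/-- The recursive subproduct code `D(r, μ)` with base code `RM(r', m')`. -/
def Dcode (r' m' : ℕ) : ℕ → (μ : ℕ) → Submodule (ZMod 2) (Vsp m' μ)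
  | _, 0 => Submodule.span (ZMod 2) {c : Vsp m' 0 | c = fun _ => 1}
  | 0, μ + 1 => Submodule.span (ZMod 2) {c : Vsp m' (μ + 1) | c = fun _ => 1}
  | _ + 1, 1 => Submodule.span (ZMod 2)
      {c : Vsp m' 1 | ∃ S : Finset (Fin m'), S.card ≤ r' ∧ c = fun x => ∏ i ∈ S, x 0 i}
  | r + 1, μ + 2 =>
    if r + 1 < μ + 2 then
      Submodule.span (ZMod 2)
        ({w | ∃ c ∈ Dcode r' m' (r + 1) (μ + 1), w = odot c (fun _ => 1)} ∪
         {w | ∃ c ∈ Dcode r' m' r (μ + 1), ∃ v ∈ RMbase r' m', w = odot c v})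
    else
      Submodule.span (ZMod 2)
        {w | ∃ c ∈ Dcode r' m' (μ + 1) (μ + 1), ∃ v ∈ RMbase r' m', w = odot c v}
  termination_by r μ => μ

/-- Monomial evaluation `mon_{S₁ ∪ ⋯ ∪ S_μ}` on the block-structured space;
a subset `S ⊆ Fin (μ·m')` is identified with a subset of `Fin μ × Fin m'`,
the first coordinate being the block index. -/
def monP {m' μ : ℕ} (S : Finset (Fin μ × Fin m')) : Vsp m' μ :=
  fun x => ∏ p ∈ S, x p.1 p.2

/-! A monomial on the block space is encoded by the family `T` of sets of variables it takes from
each block. As `⊙` is bilinear and the `⊙`-product of two monomials appends a block to the family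
(`Fin.snoc`), the recursion defining `D(r, μ)` over `RM(r', m')` turns into a recursion on families:
`D(r, μ)` is spanned by the monomials with at most `r` nonempty blocks, each of degree at most `r'`.
For `r' = 1` every nonempty block has exactly one variable, so the number of nonempty blocks is the
degree; taking `r = 2` gives the theorem. -/

open Finset

section BlockMonomials

variable {m' μ : ℕ}

def blockMon (T : Fin μ → Finset (Fin m')) : Vsp m' μ :=
  fun x => ∏ i, ∏ j ∈ T i, x i j

def baseMon (U : Finset (Fin m')) : (Fin m' → ZMod 2) → ZMod 2 :=
  fun y => ∏ j ∈ U, y j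

def numActiveBlocks (T : Fin μ → Finset (Fin m')) : ℕ :=
  #{i | (T i).Nonempty}

def Admissible (r' r : ℕ) (T : Fin μ → Finset (Fin m')) : Prop :=
  numActiveBlocks T ≤ r ∧ ∀ i, #(T i) ≤ r'

lemma blockMon_empty : blockMon (fun _ : Fin μ => (∅ : Finset (Fin m'))) = fun _ => 1 := by
  funext x; simp [blockMon]

lemma baseMon_empty : baseMon (∅ : Finset (Fin m')) = fun _ => 1 := by
  funext y; simp [baseMon]

lemma odot_blockMon_baseMon (T : Fin μ → Finset (Fin m')) (U : Finset (Fin m')) :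
    odot (blockMon T) (baseMon U) = blockMon (Fin.snoc (α := fun _ => Finset (Fin m')) T U) := by
  funext x
  simp [odot, blockMon, baseMon, Fin.prod_univ_castSucc]

lemma numActiveBlocks_le (T : Fin μ → Finset (Fin m')) : numActiveBlocks T ≤ μ :=
  (card_filter_le _ _).trans_eq (card_fin μ)

lemma numActiveBlocks_eq_zero_iff (T : Fin μ → Finset (Fin m')) :
    numActiveBlocks T = 0 ↔ T = fun _ => ∅ := by
  simp [numActiveBlocks, funext_iff, Finset.not_nonempty_iff_eq_empty]

lemma numActiveBlocks_succ (T : Fin (μ + 1) → Finset (Fin m')) :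
    numActiveBlocks T =
      numActiveBlocks (Fin.init T) + if (T (Fin.last μ)).Nonempty then 1 else 0 := by
  rw [numActiveBlocks, numActiveBlocks, card_filter, card_filter, Fin.sum_univ_castSucc]
  rfl

lemma admissible_succ_iff {r' r : ℕ} (T : Fin (μ + 1) → Finset (Fin m')) :
    Admissible r' (r + 1) T ↔
      (Admissible r' (r + 1) (Fin.init T) ∧ T (Fin.last μ) = ∅) ∨
        (Admissible r' r (Fin.init T) ∧ #(T (Fin.last μ)) ≤ r') := by
  simp only [Admissible, numActiveBlocks_succ T, Fin.forall_fin_succ' (P := fun i => #(T i) ≤ r')]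
  rcases (T (Fin.last μ)).eq_empty_or_nonempty with h | h
  · simp only [h, Finset.not_nonempty_empty, if_false, add_zero, card_empty, zero_le, and_true]
    exact ⟨Or.inl, fun h' => h'.elim id fun ⟨h1, h2⟩ => ⟨h1.trans r.le_succ, h2⟩⟩
  · simp only [h, if_true, h.ne_empty, and_false, false_or, Nat.add_le_add_iff_right, and_assoc]
    rfl

lemma admissible_zero_iff {r' : ℕ} (T : Fin μ → Finset (Fin m')) :
    Admissible r' 0 T ↔ T = fun _ => ∅ := by
  rw [Admissible, Nat.le_zero, numActiveBlocks_eq_zero_iff]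
  exact and_iff_left_of_imp fun h i => by simp [h]

lemma admissible_iff_of_le {r' r : ℕ} (hμ : μ ≤ r) (T : Fin μ → Finset (Fin m')) :
    Admissible r' r T ↔ ∀ i, #(T i) ≤ r' :=
  and_iff_right ((numActiveBlocks_le T).trans hμ)

lemma numActiveBlocks_eq_sum_card {T : Fin μ → Finset (Fin m')} (hT : ∀ i, #(T i) ≤ 1) :
    numActiveBlocks T = ∑ i, #(T i) := by
  rw [numActiveBlocks, card_filter]
  refine sum_congr rfl fun i _ => ?_
  rcases (T i).eq_empty_or_nonempty with h | h
  · simp [h]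
  · rw [if_pos h]
    exact le_antisymm h.card_pos (hT i)

lemma admissible_one_iff {r : ℕ} (T : Fin μ → Finset (Fin m')) :
    Admissible 1 r T ↔ ∑ i, #(T i) ≤ r ∧ ∀ i, #(T i) ≤ 1 :=
  and_congr_left fun hT => by rw [numActiveBlocks_eq_sum_card hT]

end BlockMonomials

section Odot

variable {m' μ : ℕ}

def odotBilin (m' μ : ℕ) :
    Vsp m' μ →ₗ[ZMod 2] ((Fin m' → ZMod 2) → ZMod 2) →ₗ[ZMod 2] Vsp m' (μ + 1) :=
  LinearMap.mk₂ (ZMod 2) odot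
    (fun _ _ _ => funext fun _ => add_mul _ _ _)
    (fun _ _ _ => funext fun _ => mul_assoc _ _ _)
    (fun _ _ _ => funext fun _ => mul_add _ _ _)
    (fun _ _ _ => funext fun _ => mul_left_comm _ _ _)

lemma span_setOf_odot (p : Submodule (ZMod 2) (Vsp m' μ))
    (q : Submodule (ZMod 2) ((Fin m' → ZMod 2) → ZMod 2)) :
    Submodule.span (ZMod 2) {w | ∃ c ∈ p, ∃ v ∈ q, w = odot c v} =
      Submodule.map₂ (odotBilin m' μ) p q := by
  rw [Submodule.map₂_eq_span_image2]
  congr 1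
  ext w
  simp [Set.mem_image2, eq_comm, odotBilin]

lemma span_setOf_odot_one (p : Submodule (ZMod 2) (Vsp m' μ)) :
    Submodule.span (ZMod 2) {w | ∃ c ∈ p, w = odot c (fun _ => 1)} =
      Submodule.map₂ (odotBilin m' μ) p (Submodule.span (ZMod 2) {baseMon ∅}) := by
  rw [Submodule.map₂_span_singleton_eq_map_flip, baseMon_empty, ← Submodule.span_eq p,
    ← Submodule.span_image, Submodule.span_eq p]
  congr 1
  ext w
  simp [eq_comm, odotBilin]

lemma image2_snoc (A : Set (Fin μ → Finset (Fin m'))) (B : Set (Finset (Fin m'))) :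
    Set.image2 (Fin.snoc (α := fun _ => Finset (Fin m'))) A B =
      {T : Fin (μ + 1) → Finset (Fin m') | Fin.init T ∈ A ∧ T (Fin.last μ) ∈ B} := by
  ext T
  constructor
  · rintro ⟨T, hT, U, hU, rfl⟩
    simpa using ⟨hT, hU⟩
  · rintro ⟨hT, hU⟩
    exact ⟨_, hT, _, hU, Fin.snoc_init_self T⟩

lemma map₂_odot_span_blockMon (A : Set (Fin μ → Finset (Fin m'))) (B : Set (Finset (Fin m'))) :
    Submodule.map₂ (odotBilin m' μ) (Submodule.span (ZMod 2) (blockMon '' A))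
        (Submodule.span (ZMod 2) (baseMon '' B)) =
      Submodule.span (ZMod 2)
        (blockMon '' {T : Fin (μ + 1) → Finset (Fin m') | Fin.init T ∈ A ∧ T (Fin.last μ) ∈ B}) := by
  rw [Submodule.map₂_span_span, ← image2_snoc, Set.image_image2, Set.image2_image_left,
    Set.image2_image_right]
  simp only [odotBilin, LinearMap.mk₂_apply, odot_blockMon_baseMon]

lemma RMbase_eq_span_baseMon (r' m' : ℕ) :
    RMbase r' m' = Submodule.span (ZMod 2) (baseMon '' {U | #U ≤ r'}) := by
  rw [RMbase]
  congr 1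
  ext v
  simp only [Set.mem_ofPred_eq, Set.mem_image]
  exact exists_congr fun U => and_congr_right' eq_comm

end Odot

theorem Dcode_eq_span_blockMon (r' m' r μ : ℕ) :
    Dcode r' m' r μ = Submodule.span (ZMod 2) (blockMon '' {T | Admissible r' r T}) := by
  induction r, μ using Dcode.induct with
  | case1 r =>
    rw [Dcode.eq_1]
    congr 1
    ext c
    constructor
    · rintro rfl
      exact ⟨Fin.elim0, ⟨(numActiveBlocks_le _).trans r.zero_le, fun i => i.elim0⟩,
        funext fun _ => Fin.prod_univ_zero _⟩
    · rintro ⟨T, -, rfl⟩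
      exact funext fun _ => Fin.prod_univ_zero _
  | case2 μ =>
    rw [Dcode.eq_2, show {T | Admissible r' 0 T} = {fun _ => ∅} from Set.ext admissible_zero_iff,
      Set.image_singleton, blockMon_empty]
    rfl
  | case3 r =>
    rw [Dcode.eq_3]
    congr 1
    ext c
    simp only [Set.mem_ofPred_eq, Set.mem_image, admissible_iff_of_le (Nat.le_add_left 1 r),
      Fin.forall_fin_one]
    constructor
    · rintro ⟨S, hS, rfl⟩
      exact ⟨fun _ => S, hS, funext fun _ => Fin.prod_univ_one _⟩
    · rintro ⟨T, hT, rfl⟩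
      exact ⟨T 0, hT, funext fun _ => Fin.prod_univ_one _⟩
  | case4 r μ hlt ih₁ ih₀ =>
    rw [Dcode.eq_4, if_pos hlt, Submodule.span_union, span_setOf_odot_one, span_setOf_odot, ih₁,
      ih₀, RMbase_eq_span_baseMon, ← Set.image_singleton, map₂_odot_span_blockMon,
      map₂_odot_span_blockMon, ← Submodule.span_union, ← Set.image_union]
    congr 2
    ext T
    exact (admissible_succ_iff T).symm
  | case5 r μ hle ih =>
    rw [Dcode.eq_4, if_neg hle, span_setOf_odot, ih, RMbase_eq_span_baseMon,
      map₂_odot_span_blockMon]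
    congr 2
    ext T
    simp only [Set.mem_ofPred_eq, admissible_iff_of_le le_rfl,
      admissible_iff_of_le (show μ + 2 ≤ r + 1 by omega),
      Fin.forall_fin_succ' (P := fun i => #(T i) ≤ r')]
    rfl

section ToBlocks

variable {m' μ : ℕ}

def toBlocks (S : Finset (Fin μ × Fin m')) (i : Fin μ) : Finset (Fin m') :=
  {j | (i, j) ∈ S}

lemma toBlocks_surjective : Function.Surjective (toBlocks (μ := μ) (m' := m')) :=
  fun T => ⟨univ.filter fun p : Fin μ × Fin m' => p.2 ∈ T p.1, by ext i j; simp [toBlocks]⟩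

lemma monP_eq_blockMon_toBlocks (S : Finset (Fin μ × Fin m')) : monP S = blockMon (toBlocks S) := by
  funext x
  simp only [monP, blockMon, toBlocks, prod_filter]
  rw [← Fintype.prod_prod_type (f := fun p => if p ∈ S then x p.1 p.2 else 1), prod_ite_mem,
    univ_inter]

lemma image_monP_preimage_toBlocks (X : Set (Fin μ → Finset (Fin m'))) :
    monP '' (toBlocks ⁻¹' X) = blockMon '' X := by
  rw [show monP = blockMon ∘ toBlocks from funext monP_eq_blockMon_toBlocks, Set.image_comp,
    Set.image_preimage_eq X toBlocks_surjective]

lemma card_filter_fst_eq_card_toBlocks (S : Finset (Fin μ × Fin m')) (i : Fin μ) :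
    #{p ∈ S | p.1 = i} = #(toBlocks S i) := by
  have : {p ∈ S | p.1 = i} = (toBlocks S i).map ⟨Prod.mk i, Prod.mk_right_injective i⟩ := by
    ext ⟨a, b⟩
    simp only [mem_filter, toBlocks, mem_map, mem_univ, true_and, Function.Embedding.coeFn_mk,
      Prod.mk.injEq]
    constructor
    · rintro ⟨h, rfl⟩
      exact ⟨b, h, rfl, rfl⟩
    · rintro ⟨b, h, rfl, rfl⟩
      exact ⟨h, rfl⟩
  rw [this, card_map]

lemma card_eq_sum_card_toBlocks (S : Finset (Fin μ × Fin m')) : #S = ∑ i, #(toBlocks S i) := by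
  rw [card_eq_sum_card_fiberwise (f := Prod.fst) (t := univ) fun _ _ => mem_univ _]
  simp only [card_filter_fst_eq_card_toBlocks]

end ToBlocks

theorem stmt_2_general (m m' : ℕ) :
    Dcode 1 m' 2 m = Submodule.span (ZMod 2)
      {c : Vsp m' m | ∃ S : Finset (Fin m × Fin m'),
        S.card ≤ 2 ∧ (∀ i : Fin m, (S.filter fun p => p.1 = i).card ≤ 1) ∧ c = monP S} := by
  rw [Dcode_eq_span_blockMon, ← image_monP_preimage_toBlocks]
  congr 1
  ext c
  simp only [Set.mem_image, Set.mem_preimage, Set.mem_ofPred_eq, admissible_one_iff,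
    card_filter_fst_eq_card_toBlocks]
  simp only [card_eq_sum_card_toBlocks, and_assoc, @eq_comm _ c]

/-- for `m, m' ≥ 2` and base code `RM(1,m')`, the code `D(2,m)` equals the
span of the monomials `mon_S` with `|S| ≤ 2` and `|S ∩ Bᵢ| ≤ 1` for every block `Bᵢ`. -/
theorem stmt_2 (m m' : ℕ) (hm : 2 ≤ m) (hm' : 2 ≤ m') :
    Dcode 1 m' 2 m = Submodule.span (ZMod 2)
      {c : Vsp m' m | ∃ S : Finset (Fin m × Fin m'),
        S.card ≤ 2 ∧ (∀ i : Fin m, (S.filter fun p => p.1 = i).card ≤ 1) ∧ c = monP S} :=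
  stmt_2_general m m'
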